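/- In the graph G, for all a≠b in {1,…,n}: Max-Dist(S_a,S_b) = (2d+1)·M + max_{i∈{1,…,d}} (v_a[i]+v_b[i]). Consequently, Max-Dist(S_a,S_b) ≤ (2d+1)·M + 1 if v_a and v_b are orthogonal, and Max-Dist(S_a,S_b) = (2d+1)·M + 2 otherwise. -/

import Mathlib

open Finset

namespace OVGadget

inductive V (n d : ℕ) : Type
  | U : Fin n → Fin d → V n d
  | U' : Fin n → Fin d → V n d
  | l : V n d
  | r : V n d
  deriving DecidableEq, Fintype

def M : ℕ := 4

/-- One-directional edge-weight table encoding the vectors `v_1, …, v_n`; a value `0` means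
"no edge".  Here `j : Fin d` is 0-indexed, so `U k j` is the paper's `u_{k+1, j+1}`, whence
the weights `(j+1)·M + v_k[j]` and `(2d+1−(j+1))·M + v_k[j] = (2d−j)·M + v_k[j]`. -/
def wt0 (n d : ℕ) (v : Fin n → Fin d → Fin 2) : V n d → V n d → ℕ
  | V.U k j, V.l => (j.val + 1) * M + (v k j).val
  | V.U' k j, V.l => (2 * d - j.val) * M + (v k j).val
  | V.U k j, V.r => (2 * d - j.val) * M + (v k j).val
  | V.U' k j, V.r => (j.val + 1) * M + (v k j).val
  | _, _ => 0

/-- The symmetrized edge weight. -/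
def wtE (n d : ℕ) (v : Fin n → Fin d → Fin 2) (x y : V n d) : ℕ :=
  wt0 n d v x y + wt0 n d v y x

/-- The graph `G`: `x` and `y` are adjacent iff the weight table records an edge. -/
def G (n d : ℕ) (v : Fin n → Fin d → Fin 2) : SimpleGraph (V n d) :=
  SimpleGraph.fromRel fun x y => wt0 n d v x y ≠ 0

/-- The total weight of a walk. -/
def wWeight {n d : ℕ} {v : Fin n → Fin d → Fin 2} {x y : V n d}
    (p : (G n d v).Walk x y) : ℕ :=
  (p.darts.map fun e => wtE n d v e.toProd.1 e.toProd.2).sum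

/-- The weighted shortest-path distance: the minimum over paths from `x` to `y` of the sum
of the edge weights along the path. -/
noncomputable def dist (n d : ℕ) (v : Fin n → Fin d → Fin 2) (x y : V n d) : ℕ :=
  sInf {m | ∃ p : (G n d v).Walk x y, p.IsPath ∧ wWeight p = m}

/-- Membership in the set `S_k = {u_{k,j}, u'_{k,j} : j}`. -/
def inS (n d : ℕ) (k : Fin n) (x : V n d) : Prop :=
  (∃ j : Fin d, x = V.U k j) ∨ (∃ j : Fin d, x = V.U' k j)

/-- The set `S_k` as a finite set of vertices. -/
def SF (n d : ℕ) (k : Fin n) : Finset (V n d) :=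
  (Finset.univ.image fun j : Fin d => V.U k j)
    ∪ (Finset.univ.image fun j : Fin d => V.U' k j)

/-- `Max-Dist(S_a, S_b) = max_{x ∈ S_a, y ∈ S_b} d(x, y)`. -/
noncomputable def maxDist (n d : ℕ) (v : Fin n → Fin d → Fin 2) (a b : Fin n) : ℕ :=
  (SF n d a ×ˢ SF n d b).sup fun p => dist n d v p.1 p.2

/-!
`G` is complete bipartite between the hubs `ℓ, r` and the vertices of the `S_k`, and a vertex
`u_{k,j}` or `u'_{k,j}` pays `w(·,ℓ) + w(·,r) = (2d+1)·M + 2·v_k[j]` in total. A path through both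
hubs therefore costs more than `(2d+1)·M + 2 ≥ min(w(x,ℓ) + w(y,ℓ), w(x,r) + w(y,r))`, so `d(x,y)`
is the cheaper of the two-edge paths `x–ℓ–y` and `x–r–y`. Its multiple of `M` is
`min(p + q, 4d + 2 − p − q)`, where the position `p` is `j` for `u_{·,j}` and `2d + 1 − j` for
`u'_{·,j}`. This equals `2d + 1` exactly for the antipodal pairs `u_{a,i}, u'_{b,i}` and is at most
`2d` otherwise; since `M > 2`, the antipodal pairs attain the maximum
`(2d+1)·M + v_a[i] + v_b[i]`.
-/

section Distances

variable {n d : ℕ} {v : Fin n → Fin d → Fin 2}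

def IsHub (x : V n d) : Prop := x = V.l ∨ x = V.r

lemma wtE_comm (x y : V n d) : wtE n d v x y = wtE n d v y x := Nat.add_comm _ _

lemma wWeight_nil {x : V n d} : wWeight (SimpleGraph.Walk.nil : (G n d v).Walk x x) = 0 := by
  simp [wWeight]

lemma wWeight_cons {x c y : V n d} (h : (G n d v).Adj x c) (q : (G n d v).Walk c y) :
    wWeight (SimpleGraph.Walk.cons h q) = wtE n d v x c + wWeight q := by
  simp [wWeight]

lemma not_isHub_iff {x : V n d} : ¬IsHub x ↔ ∃ k j, x = V.U k j ∨ x = V.U' k j := by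
  cases x <;> simp [IsHub]

lemma adj_iff_isHub_iff_not_isHub (x y : V n d) :
    (G n d v).Adj x y ↔ (IsHub x ↔ ¬IsHub y) := by
  have hj (j : Fin d) : ¬2 * d ≤ j := by omega
  rw [G, SimpleGraph.fromRel_adj]
  cases x <;> cases y <;> simp [IsHub, wt0, M, Nat.sub_eq_zero_iff_le, hj]

lemma isHub_of_adj {x y : V n d} (hx : ¬IsHub x) (h : (G n d v).Adj x y) : IsHub y := by
  rw [adj_iff_isHub_iff_not_isHub] at h
  exact not_not.mp (mt h.2 hx)

lemma not_isHub_of_adj {x y : V n d} (hx : IsHub x) (h : (G n d v).Adj x y) : ¬IsHub y := by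
  rw [adj_iff_isHub_iff_not_isHub] at h
  tauto

lemma adj_of_not_isHub {x c : V n d} (hx : ¬IsHub x) (hc : IsHub c) : (G n d v).Adj x c := by
  rw [adj_iff_isHub_iff_not_isHub]
  tauto

lemma M_le_wtE {x c : V n d} (hx : ¬IsHub x) (hc : IsHub c) : M ≤ wtE n d v x c := by
  obtain ⟨k, j, rfl | rfl⟩ := not_isHub_iff.1 hx <;> rcases hc with rfl | rfl <;>
    · have := j.isLt
      simp only [wtE, wt0, M]
      omega

lemma wtE_l_add_wtE_r_bounds {x : V n d} (hx : ¬IsHub x) :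
    (2 * d + 1) * M ≤ wtE n d v x V.l + wtE n d v x V.r ∧
      wtE n d v x V.l + wtE n d v x V.r ≤ (2 * d + 1) * M + 2 := by
  obtain ⟨k, j, rfl | rfl⟩ := not_isHub_iff.1 hx <;>
    · have := j.isLt
      have := (v k j).isLt
      simp only [wtE, wt0, M]
      omega

lemma exists_isPath_wWeight_eq_of_isHub {x y c : V n d} (hx : ¬IsHub x) (hy : ¬IsHub y)
    (hxy : x ≠ y) (hc : IsHub c) :
    ∃ p : (G n d v).Walk x y, p.IsPath ∧ wWeight p = wtE n d v x c + wtE n d v y c := by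
  have hxc : x ≠ c := fun h => hx (h ▸ hc)
  have hyc : y ≠ c := fun h => hy (h ▸ hc)
  refine ⟨.cons (adj_of_not_isHub hx hc) (.cons (adj_of_not_isHub hy hc).symm .nil), ?_, ?_⟩
  · simp [SimpleGraph.Walk.isPath_def, hxc, hxy, hyc.symm]
  · rw [wWeight_cons, wWeight_cons, wWeight_nil, wtE_comm c y, add_zero]

lemma min_le_wWeight {x y : V n d} (hx : ¬IsHub x) (hy : ¬IsHub y) (hxy : x ≠ y)
    (p : (G n d v).Walk x y) (hp : p.IsPath) :
    min (wtE n d v x V.l + wtE n d v y V.l) (wtE n d v x V.r + wtE n d v y V.r)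
      ≤ wWeight p := by
  have hmin : min (wtE n d v x V.l + wtE n d v y V.l) (wtE n d v x V.r + wtE n d v y V.r)
      ≤ (2 * d + 1) * M + 2 := by
    have := wtE_l_add_wtE_r_bounds (v := v) hx
    have := wtE_l_add_wtE_r_bounds (v := v) hy
    omega
  cases p with
  | nil => exact absurd rfl hxy
  | @cons _ c _ hxc q =>
    have hc := isHub_of_adj hx hxc
    cases q with
    | nil => exact absurd hc hy
    | @cons _ z _ hcz q =>
      have hz := not_isHub_of_adj hc hcz
      rw [wWeight_cons, wWeight_cons]
      cases q with
      | nil =>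
        rw [wWeight_nil, wtE_comm c]
        rcases hc with rfl | rfl <;> omega
      | @cons _ c' _ hzc' q =>
        have hc' := isHub_of_adj hz hzc'
        have hcc' : c ≠ c' := by
          rintro rfl
          simpa using hp.support_nodup
        have hrow : wtE n d v c z + wtE n d v z c' = wtE n d v z V.l + wtE n d v z V.r := by
          rw [wtE_comm c]
          rcases hc with rfl | rfl <;> rcases hc' with rfl | rfl <;>
            first | omega | exact absurd rfl hcc'
        have := M_le_wtE (v := v) hx hc
        have := wtE_l_add_wtE_r_bounds (v := v) hz
        have : M = 4 := rfl
        rw [wWeight_cons]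
        omega

lemma dist_eq_min {x y : V n d} (hx : ¬IsHub x) (hy : ¬IsHub y) (hxy : x ≠ y) :
    dist n d v x y =
      min (wtE n d v x V.l + wtE n d v y V.l) (wtE n d v x V.r + wtE n d v y V.r) := by
  obtain ⟨pl, hpl, hwl⟩ := exists_isPath_wWeight_eq_of_isHub (v := v) hx hy hxy (.inl rfl)
  obtain ⟨pr, hpr, hwr⟩ := exists_isPath_wWeight_eq_of_isHub (v := v) hx hy hxy (.inr rfl)
  refine le_antisymm (le_min (Nat.sInf_le ⟨pl, hpl, hwl⟩) (Nat.sInf_le ⟨pr, hpr, hwr⟩)) ?_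
  obtain ⟨p, hp, hw⟩ : dist n d v x y ∈ {m | ∃ p : (G n d v).Walk x y, p.IsPath ∧ wWeight p = m} :=
    Nat.sInf_mem ⟨_, pl, hpl, rfl⟩
  exact hw ▸ min_le_wWeight hx hy hxy p hp

lemma mem_SF {k : Fin n} {x : V n d} :
    x ∈ SF n d k ↔ (∃ j, x = V.U k j) ∨ ∃ j, x = V.U' k j := by
  simp [SF, eq_comm]

lemma dist_U_U' (a b : Fin n) (i : Fin d) :
    dist n d v (V.U a i) (V.U' b i) = (2 * d + 1) * M + ((v a i).val + (v b i).val) := by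
  rw [dist_eq_min (by simp [IsHub]) (by simp [IsHub]) (by simp)]
  have := i.isLt
  simp only [wtE, wt0, M]
  omega

lemma dist_le_of_mem_SF {a b : Fin n} (hab : a ≠ b) {x y : V n d} (hx : x ∈ SF n d a)
    (hy : y ∈ SF n d b) :
    dist n d v x y ≤
      (2 * d + 1) * M + (Finset.univ.sup fun i : Fin d => (v a i).val + (v b i).val) := by
  have hle (i : Fin d) : (v a i).val + (v b i).val ≤
      Finset.univ.sup fun i : Fin d => (v a i).val + (v b i).val :=
    le_sup (f := fun i : Fin d => (v a i).val + (v b i).val) (mem_univ i)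
  rcases mem_SF.1 hx with ⟨i, rfl⟩ | ⟨i, rfl⟩ <;> rcases mem_SF.1 hy with ⟨j, rfl⟩ | ⟨j, rfl⟩ <;>
  · rw [dist_eq_min (not_isHub_iff.2 ⟨a, i, by simp⟩) (not_isHub_iff.2 ⟨b, j, by simp⟩)
      (by simp [hab])]
    have := hle i
    have := i.isLt
    have := j.isLt
    have := (v a i).isLt
    have := (v b j).isLt
    obtain rfl | hij := eq_or_ne i j
    · simp only [wtE, wt0, M]
      omega
    · have := Fin.val_ne_of_ne hij
      simp only [wtE, wt0, M]
      omega

lemma maxDist_eq (hd : 1 ≤ d) {a b : Fin n} (hab : a ≠ b) :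
    maxDist n d v a b =
      (2 * d + 1) * M + (Finset.univ.sup fun i : Fin d => (v a i).val + (v b i).val) := by
  refine le_antisymm (Finset.sup_le fun p hp => ?_) ?_
  · exact dist_le_of_mem_SF hab (mem_product.1 hp).1 (mem_product.1 hp).2
  · obtain ⟨i, -, hi⟩ := exists_mem_eq_sup univ (univ_nonempty_iff.2 ⟨⟨0, hd⟩⟩)
      fun i : Fin d => (v a i).val + (v b i).val
    rw [hi, ← dist_U_U']
    have hmem : (V.U a i, V.U' b i) ∈ SF n d a ×ˢ SF n d b :=
      mem_product.2 ⟨mem_SF.2 (.inl ⟨i, rfl⟩), mem_SF.2 (.inr ⟨i, rfl⟩)⟩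
    exact le_sup (f := fun p : V n d × V n d => dist n d v p.1 p.2) hmem

end Distances

lemma val_add_le_one_iff_val_mul_eq_zero (p q : Fin 2) : p.val + q.val ≤ 1 ↔ p.val * q.val = 0 := by
  fin_cases p <;> fin_cases q <;> decide

lemma sup_val_add_le_one_iff {ι : Type*} [Fintype ι] (x y : ι → Fin 2) :
    (Finset.univ.sup fun i => (x i).val + (y i).val) ≤ 1 ↔ ∀ i, (x i).val * (y i).val = 0 := by
  simp [Finset.sup_le_iff, val_add_le_one_iff_val_mul_eq_zero]

lemma sup_val_add_le_two {ι : Type*} [Fintype ι] (x y : ι → Fin 2) :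
    (Finset.univ.sup fun i => (x i).val + (y i).val) ≤ 2 :=
  Finset.sup_le fun i _ => by have := (x i).isLt; have := (y i).isLt; omega

theorem maxDist_formula_general (n d : ℕ) (hd : 1 ≤ d)
    (v : Fin n → Fin d → Fin 2) (a b : Fin n) (hab : a ≠ b) :
    maxDist n d v a b =
      (2 * d + 1) * M + (Finset.univ.sup fun i : Fin d => (v a i).val + (v b i).val)
    ∧ ((∀ i : Fin d, (v a i).val * (v b i).val = 0) →
        maxDist n d v a b ≤ (2 * d + 1) * M + 1)
    ∧ (¬(∀ i : Fin d, (v a i).val * (v b i).val = 0) →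
        maxDist n d v a b = (2 * d + 1) * M + 2) := by
  have hmax := maxDist_eq (v := v) hd hab
  refine ⟨hmax, fun horth => ?_, fun horth => ?_⟩
  · rw [hmax]
    have := (sup_val_add_le_one_iff (v a) (v b)).2 horth
    omega
  · rw [hmax]
    have := mt (sup_val_add_le_one_iff (v a) (v b)).1 horth
    have := sup_val_add_le_two (v a) (v b)
    omega

/-- For `a ≠ b`: `Max-Dist(S_a, S_b) = (2d+1)·M + max_i (v_a[i] + v_b[i])`; consequently it
is at most `(2d+1)·M + 1` if `v_a, v_b` are orthogonal and equals `(2d+1)·M + 2`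
otherwise. -/
theorem maxDist_formula (n d : ℕ) (hn : 2 ≤ n) (hd : 1 ≤ d)
    (v : Fin n → Fin d → Fin 2) (a b : Fin n) (hab : a ≠ b) :
    maxDist n d v a b =
      (2 * d + 1) * M + (Finset.univ.sup fun i : Fin d => (v a i).val + (v b i).val)
    ∧ ((∀ i : Fin d, (v a i).val * (v b i).val = 0) →
        maxDist n d v a b ≤ (2 * d + 1) * M + 1)
    ∧ (¬(∀ i : Fin d, (v a i).val * (v b i).val = 0) →
        maxDist n d v a b = (2 * d + 1) * M + 2) :=
  maxDist_formula_general n d hd v a b hab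

end OVGadget
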